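/- Let f : Y → Y' be a dominant morphism, locally of finite type, between irreducible and reduced (i.e., integral) noetherian schemes, such that the function field of Y is a finite extension of the function field of Y' (f is generically finite) and the canonical morphism of sheaves O_{Y'} → f_* O_Y is an isomorphism. Then f is birational; that is, the induced map between the function fields of Y' and Y is an isomorphism. -/

import Mathlib

/-!
Let `η`, `η'` be the generic points of `Y`, `Y'`; dominance gives `f η = η'`. If `f y = η'`,
then `𝒪_{Y,y}` embeds in `K(Y)`, which is integral over `𝒪_{Y',η'} = K(Y')`; so `𝒪_{Y,y}` is a
domain integral over a field, hence a field, and `y = η`. Since `Y` is noetherian, the closure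
of `f (Y ∖ V)` is the union of the closures of the images of the generic points of the finitely
many components of `Y ∖ V`; hence for every open `V ∋ η` the open `U' = Y' ∖ closure (f (Y ∖ V))`
contains `η'` and `f⁻¹ U' ⊆ V`. A germ at `η` is thus a section over some `f⁻¹ U'`, which comes
from `𝒪_{Y'}(U')` because `𝒪_{Y'} ≅ f_* 𝒪_Y`: the map `K(Y') → K(Y)` is surjective, and it is
injective as a ring map out of a field.
-/

open CategoryTheory Opposite TopologicalSpace

lemma exists_specializes_of_mem_closure_image {X X' : Type*} [TopologicalSpace X]
    [TopologicalSpace X'] [NoetherianSpace X] [QuasiSober X] {g : X → X'} (hg : Continuous g)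
    {Z : Set X} (hZ : IsClosed Z) {x' : X'} (hx' : x' ∈ closure (g '' Z)) :
    ∃ z ∈ Z, g z ⤳ x' := by
  obtain ⟨S, hSfin, hSclosed, hSirr, rfl⟩ :=
    NoetherianSpace.exists_finite_set_isClosed_irreducible hZ
  rw [Set.sUnion_eq_biUnion, Set.image_iUnion₂, hSfin.closure_biUnion] at hx'
  obtain ⟨s, hs, hx's⟩ := Set.mem_iUnion₂.mp hx'
  have hξ := (hSirr s hs).isGenericPoint_genericPoint (hSclosed s hs)
  refine ⟨_, ⟨s, hs, hξ.mem⟩, ?_⟩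
  rwa [specializes_iff_mem_closure, (hξ.image hg).def]

lemma exists_isOpen_mem_preimage_subset {X X' : Type*} [TopologicalSpace X]
    [TopologicalSpace X'] [NoetherianSpace X] [QuasiSober X] {g : X → X'} (hg : Continuous g)
    {x : X} (hx : ∀ z, g z ⤳ g x → z = x) {V : Set X} (hV : IsOpen V) (hxV : x ∈ V) :
    ∃ U : Set X', IsOpen U ∧ g x ∈ U ∧ g ⁻¹' U ⊆ V := by
  refine ⟨(closure (g '' Vᶜ))ᶜ, isClosed_closure.isOpen_compl, fun hgx ↦ ?_, fun z hz ↦ ?_⟩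
  · obtain ⟨z, hzV, hz⟩ := exists_specializes_of_mem_closure_image hg hV.isClosed_compl hgx
    exact hzV (hx z hz ▸ hxV)
  · by_contra hzV
    exact hz (subset_closure ⟨z, hzV, rfl⟩)

lemma DenseRange.apply_genericPoint {X X' : Type*} [TopologicalSpace X] [TopologicalSpace X']
    [QuasiSober X] [IrreducibleSpace X] [QuasiSober X'] [IrreducibleSpace X'] [T0Space X']
    {g : X → X'} (hg : Continuous g) (hd : DenseRange g) :
    g (genericPoint X) = genericPoint X' := by
  have := (genericPoint_spec X).image hg
  rw [Set.image_univ, hd.closure_eq] at this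
  exact this.eq (genericPoint_spec X')

namespace AlgebraicGeometry

lemma Scheme.eq_of_specializes_of_isField_stalk {X : Scheme} {x y : X} (h : y ⤳ x)
    (hx : IsField (X.presheaf.stalk x)) : y = x := by
  let := hx.toField
  have : Subsingleton (Spec (X.presheaf.stalk x)) :=
    inferInstanceAs (Subsingleton (PrimeSpectrum (X.presheaf.stalk x)))
  have hrange : Set.Subsingleton { y | y ⤳ x } :=
    Scheme.range_fromSpecStalk (X := X) ▸ Set.subsingleton_range _
  exact hrange h specializes_rfl

lemma Scheme.Hom.eq_genericPoint_of_base_eq {Y Y' : Scheme} (f : Y ⟶ Y') [IsIntegral Y]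
    (hint : (f.stalkMap (genericPoint Y)).hom.IsIntegral) {y : Y}
    (hy : f.base y = f.base (genericPoint Y)) (hfield : IsField (Y'.presheaf.stalk (f.base y))) :
    y = genericPoint Y := by
  have hsp := genericPoint_specializes y
  have : IsIso (Y'.presheaf.stalkSpecializes (f.base.hom.map_specializes hsp)) :=
    inferInstanceAs (IsIso (Y'.presheaf.stalkCongr (.of_eq hy.symm)).inv)
  have hcomp : ((Y.presheaf.stalkSpecializes hsp).hom.comp (f.stalkMap y).hom).IsIntegral := by
    rw [← CommRingCat.hom_comp, ← Scheme.Hom.stalkSpecializes_stalkMap, CommRingCat.hom_comp]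
    exact .trans _ _ (RingHom.isIntegral_of_surjective _
      (ConcreteCategory.bijective_of_isIso _).2) hint
  have hℓ : Function.Injective (Y.presheaf.stalkSpecializes hsp) :=
    IsFractionRing.injective (Y.presheaf.stalk y) Y.functionField
  algebraize [(f.stalkMap y).hom]
  have : Algebra.IsIntegral _ _ := ⟨hcomp.tower_bot _ _ hℓ⟩
  exact (Scheme.eq_of_specializes_of_isField_stalk hsp
    (isField_of_isIntegral_of_isField' hfield)).symm

lemma Scheme.Hom.stalkMap_surjective_of_forall_exists_preimage_le {Y Y' : Scheme}
    (f : Y ⟶ Y') (happ : ∀ U, Function.Surjective (f.app U)) {x : Y}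
    (hx : ∀ V : Y.Opens, x ∈ V → ∃ U : Y'.Opens, f.base x ∈ U ∧ f ⁻¹ᵁ U ≤ V) :
    Function.Surjective (f.stalkMap x) := by
  intro t
  obtain ⟨V, hxV, s, rfl⟩ := Y.presheaf.exists_germ_eq t
  obtain ⟨U, hxU, hUV⟩ := hx V hxV
  obtain ⟨r, hr⟩ := happ U (Y.presheaf.map (homOfLE hUV).op s)
  refine ⟨Y'.presheaf.germ U (f.base x) hxU r, ?_⟩
  rw [Scheme.Hom.germ_stalkMap_apply, hr]
  exact TopCat.Presheaf.germ_res_apply _ _ _ _ _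

end AlgebraicGeometry

open AlgebraicGeometry

theorem birational_of_genericallyFinite_of_pushforward_iso_general
    {Y Y' : Scheme} (f : Y ⟶ Y')
    [IsIntegral Y] [IsIntegral Y'] [IsNoetherian Y]
    [IsDominant f]
    (hfin : RingHom.Finite (f.stalkMap (genericPoint Y)).hom)
    (hc : IsIso f.c) :
    IsIso (f.stalkMap (genericPoint Y)) := by
  have hgen : f.base (genericPoint Y) = genericPoint Y' :=
    f.denseRange.apply_genericPoint f.continuous
  have hfield : IsField (Y'.presheaf.stalk (f.base (genericPoint Y))) := by
    rw [hgen]; exact Field.toIsField _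
  have hfiber (y : Y) (hy : f.base y ⤳ f.base (genericPoint Y)) : y = genericPoint Y := by
    have hy' : f.base y = f.base (genericPoint Y) :=
      (hy.antisymm (hgen ▸ genericPoint_specializes _)).eq
    exact f.eq_genericPoint_of_base_eq hfin.to_isIntegral hy' (hy' ▸ hfield)
  have happ (U : Y'.Opens) : Function.Surjective (f.app U) :=
    (ConcreteCategory.bijective_of_isIso (f.c.app (op U))).2
  rw [ConcreteCategory.isIso_iff_bijective]
  refine ⟨?_, f.stalkMap_surjective_of_forall_exists_preimage_le happ fun V hV ↦ ?_⟩
  · let := hfield.toField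
    exact (f.stalkMap (genericPoint Y)).hom.injective
  · obtain ⟨U, hU, hxU, hUV⟩ := exists_isOpen_mem_preimage_subset f.continuous hfiber V.isOpen hV
    exact ⟨⟨U, hU⟩, hxU, hUV⟩

/-- Let `f : Y ⟶ Y'` be a dominant, locally of finite type morphism of integral
noetherian schemes which is generically finite (the induced extension of
function fields, i.e. the stalk map at the generic point, is module-finite)
and satisfies `O_{Y'} ≅ f_* O_Y`.  Then `f` is birational: the induced map on
function fields is an isomorphism. -/
theorem birational_of_genericallyFinite_of_pushforward_iso
    {Y Y' : Scheme} (f : Y ⟶ Y')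
    [IsIntegral Y] [IsIntegral Y'] [IsNoetherian Y] [IsNoetherian Y']
    [LocallyOfFiniteType f] [IsDominant f]
    (hfin : RingHom.Finite (f.stalkMap (genericPoint Y)).hom)
    (hc : IsIso f.c) :
    IsIso (f.stalkMap (genericPoint Y)) :=
  birational_of_genericallyFinite_of_pushforward_iso_general f hfin hc
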